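/- Let R be a Noetherian ring, F a finitely generated free R-module, and U ⊆ L ⊆ F submodules. Then L is integral over U in F (i.e., the subalgebra R[L] of Sym(F) is integral over R[U]) if and only if for every minimal prime Q of R, the image of L in F/QF is integral over the image of U in the sense that R[L'] ⊆ Sym_{R/Q}(F/QF) is integral over R[U']. -/

import Mathlib

noncomputable section

open TensorAlgebra in
/-- The relation defining the symmetric algebra as a quotient of the tensor algebra. -/
inductive SymRel (R : Type*) [CommRing R] (M : Type*) [AddCommGroup M] [Module R M] :
    TensorAlgebra R M → TensorAlgebra R M → Prop
  | mul_comm (x y : M) : SymRel R M (ι R x * ι R y) (ι R y * ι R x)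

/-- The symmetric algebra of a module. -/
abbrev SymmAlg (R : Type*) [CommRing R] (M : Type*) [AddCommGroup M] [Module R M] :=
  RingQuot (SymRel R M)

variable (R : Type*) [CommRing R] {M N : Type*} [AddCommGroup M] [Module R M]
  [AddCommGroup N] [Module R N]

/-- The canonical inclusion of `M` in degree one of its symmetric algebra. -/
def SymmAlg.ι : M →ₗ[R] SymmAlg R M :=
  (RingQuot.mkAlgHom R (SymRel R M)).toLinearMap ∘ₗ TensorAlgebra.ι R

instance : CommRing (SymmAlg R M) :=
  { (inferInstance : Ring (SymmAlg R M)) with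
    mul_comm := by
      have key : ∀ x y : TensorAlgebra R M,
          RingQuot.mkAlgHom R (SymRel R M) x * RingQuot.mkAlgHom R (SymRel R M) y =
          RingQuot.mkAlgHom R (SymRel R M) y * RingQuot.mkAlgHom R (SymRel R M) x := by
        intro x y
        induction x using TensorAlgebra.induction with
        | algebraMap r => simp [Algebra.commutes]
        | ι m =>
          induction y using TensorAlgebra.induction with
          | algebraMap r => simp [Algebra.commutes]
          | ι m' =>
            have h := RingQuot.mkAlgHom_rel R (SymRel.mul_comm (R := R) m m')
            simpa only [map_mul] using h
          | add a b ha hb => simp only [map_add, add_mul, mul_add, ha, hb]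
          | mul a b ha hb =>
            simp only [map_mul, ← mul_assoc, ha]
            rw [mul_assoc _ _ (RingQuot.mkAlgHom R (SymRel R M) b), hb, mul_assoc]
        | add a b ha hb => simp only [map_add, add_mul, mul_add, ha, hb]
        | mul a b ha hb =>
          simp only [map_mul, mul_assoc, hb]
          rw [← mul_assoc, ha, mul_assoc]
      intro a b
      obtain ⟨x, rfl⟩ := RingQuot.mkAlgHom_surjective R (SymRel R M) a
      obtain ⟨y, rfl⟩ := RingQuot.mkAlgHom_surjective R (SymRel R M) b
      exact key x y }

theorem SymmAlg.ι_mul_comm (x y : M) :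
    SymmAlg.ι R x * SymmAlg.ι R y = SymmAlg.ι R y * SymmAlg.ι R x := mul_comm _ _

/-- Functoriality of the symmetric algebra. -/
def SymmAlg.map (f : M →ₗ[R] N) : SymmAlg R M →ₐ[R] SymmAlg R N :=
  RingQuot.liftAlgHom R ⟨TensorAlgebra.lift R ((SymmAlg.ι R).comp f), by
    intro x y h
    cases h with
    | mul_comm a b => simp [mul_comm]⟩

namespace SymmAlg

variable {A : Type*} [CommRing A] [Algebra R A]

/-- Universal property. -/
def lift (f : M →ₗ[R] A) : SymmAlg R M →ₐ[R] A :=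
  RingQuot.liftAlgHom R ⟨TensorAlgebra.lift R f, by
    intro x y h
    cases h with
    | mul_comm a b => simp [mul_comm]⟩

@[simp] theorem lift_ι_apply (f : M →ₗ[R] A) (m : M) : lift R f (SymmAlg.ι R m) = f m := by
  simp [lift, SymmAlg.ι, RingQuot.liftAlgHom_mkAlgHom_apply]

theorem algHom_ext {f g : SymmAlg R M →ₐ[R] A}
    (h : ∀ m, f (SymmAlg.ι R m) = g (SymmAlg.ι R m)) : f = g := by
  refine RingQuot.ringQuot_ext' _ _ _ ?_
  refine TensorAlgebra.hom_ext (LinearMap.ext fun m => ?_)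
  simpa [SymmAlg.ι] using h m

theorem adjoin_range_ι : Algebra.adjoin R (Set.range (SymmAlg.ι R (M := M))) = ⊤ := by
  rw [eq_top_iff]
  rintro x -
  obtain ⟨y, rfl⟩ := RingQuot.mkAlgHom_surjective R (SymRel R M) x
  induction y using TensorAlgebra.induction with
  | algebraMap r => rw [AlgHom.commutes]; exact Subalgebra.algebraMap_mem _ r
  | ι m => exact Algebra.subset_adjoin ⟨m, rfl⟩
  | add a b ha hb => rw [map_add]; exact add_mem ha hb
  | mul a b ha hb => rw [map_mul]; exact mul_mem ha hb

instance [Nontrivial R] : Nontrivial (SymmAlg R M) := by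
  refine ⟨1, 0, fun h => ?_⟩
  have := congrArg (SymmAlg.lift R (0 : M →ₗ[R] R)) h
  rw [map_one, map_zero] at this
  exact one_ne_zero this

end SymmAlg

section Quot

variable {R : Type*} [CommRing R] {F : Type*} [AddCommGroup F] [Module R F] (I : Ideal R)

local notation "Fq" => F ⧸ (I • ⊤ : Submodule R F)

example : Algebra R (SymmAlg (R ⧸ I) Fq) := inferInstance
example : IsScalarTower R (R ⧸ I) (SymmAlg (R ⧸ I) Fq) := inferInstance

theorem SymmAlg.quot_algebraMap_eq (r : R) :
    algebraMap R (SymmAlg (R ⧸ I) Fq) r =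
      algebraMap (R ⧸ I) (SymmAlg (R ⧸ I) Fq) (Ideal.Quotient.mk I r) := by
  rw [IsScalarTower.algebraMap_apply R (R ⧸ I) (SymmAlg (R ⧸ I) Fq), Ideal.Quotient.algebraMap_eq]

/-- The degree one part of the reduction map. -/
def SymmAlg.down : F →ₗ[R] SymmAlg (R ⧸ I) Fq where
  toFun m := SymmAlg.ι (R ⧸ I) (Submodule.Quotient.mk m)
  map_add' a b := by
    show SymmAlg.ι (R ⧸ I) (Submodule.Quotient.mk (a + b)) = _
    rw [Submodule.Quotient.mk_add, map_add]
  map_smul' r m := by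
    show SymmAlg.ι (R ⧸ I) (Submodule.Quotient.mk (r • m))
      = r • SymmAlg.ι (R ⧸ I) (Submodule.Quotient.mk m)
    have h1 : (Submodule.Quotient.mk (r • m) : Fq)
        = Ideal.Quotient.mk I r • (Submodule.Quotient.mk m : Fq) :=
      rfl
    rw [h1, map_smul, ← algebraMap_smul (R ⧸ I) r, Ideal.Quotient.algebraMap_eq]

@[simp] theorem SymmAlg.down_apply (m : F) :
    SymmAlg.down I m = SymmAlg.ι (R ⧸ I) (Submodule.Quotient.mk m) := rfl

/-- Reduction of the symmetric algebra modulo an ideal. -/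
def SymmAlg.toQuot : SymmAlg R F →ₐ[R] SymmAlg (R ⧸ I) Fq :=
  SymmAlg.lift R (SymmAlg.down I)

@[simp] theorem SymmAlg.toQuot_ι (m : F) :
    SymmAlg.toQuot I (SymmAlg.ι R m) = SymmAlg.ι (R ⧸ I) (Submodule.Quotient.mk m) := by
  rw [SymmAlg.toQuot, SymmAlg.lift_ι_apply, SymmAlg.down_apply]

theorem SymmAlg.adjoin_quot_eq (s : Set (SymmAlg (R ⧸ I) Fq)) :
    Subalgebra.restrictScalars R (Algebra.adjoin (R ⧸ I) s) = Algebra.adjoin R s := by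
  refine le_antisymm ?_ (Algebra.adjoin_le Algebra.subset_adjoin)
  intro x hx
  change x ∈ Algebra.adjoin (R ⧸ I) s at hx
  induction hx using Algebra.adjoin_induction with
  | mem y hy => exact Algebra.subset_adjoin hy
  | algebraMap c =>
    obtain ⟨r, rfl⟩ := Ideal.Quotient.mk_surjective c
    rw [← SymmAlg.quot_algebraMap_eq]
    exact Subalgebra.algebraMap_mem _ r
  | add a b ha hb iha ihb => exact add_mem iha ihb
  | mul a b ha hb iha ihb => exact mul_mem iha ihb

theorem SymmAlg.mem_adjoin_quot_iff (s : Set (SymmAlg (R ⧸ I) Fq)) (x : SymmAlg (R ⧸ I) Fq) :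
    x ∈ Algebra.adjoin (R ⧸ I) s ↔ x ∈ Algebra.adjoin R s := by
  rw [← SymmAlg.adjoin_quot_eq]; rfl

variable {κ : Type*} (b : Module.Basis κ R F)

/-- The polynomial algebra maps onto the symmetric algebra. -/
def SymmAlg.fromPoly : MvPolynomial κ R →ₐ[R] SymmAlg R F :=
  MvPolynomial.aeval fun i => SymmAlg.ι R (b i)

@[simp] theorem SymmAlg.fromPoly_X (i : κ) :
    SymmAlg.fromPoly b (MvPolynomial.X i) = SymmAlg.ι R (b i) := by
  rw [SymmAlg.fromPoly, MvPolynomial.aeval_X]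

theorem SymmAlg.fromPoly_surjective : Function.Surjective (SymmAlg.fromPoly b) := by
  have htop : (SymmAlg.fromPoly b).range = ⊤ := by
    rw [eq_top_iff, ← SymmAlg.adjoin_range_ι R (M := F)]
    apply Algebra.adjoin_le
    rintro _ ⟨m, rfl⟩
    refine ⟨(b.repr m).sum fun i c => c • MvPolynomial.X i, ?_⟩
    show SymmAlg.fromPoly b ((b.repr m).sum fun i c => c • MvPolynomial.X i) = SymmAlg.ι R m
    have h1 : SymmAlg.fromPoly b ((b.repr m).sum fun i c => c • MvPolynomial.X i)
        = (b.repr m).sum fun i c => c • SymmAlg.ι R (b i) := by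
      rw [map_finsuppSum]
      refine Finsupp.sum_congr fun i _ => ?_
      rw [map_smul, SymmAlg.fromPoly_X]
    have h2 : ((b.repr m).sum fun i c => c • SymmAlg.ι R (b i))
        = SymmAlg.ι R ((b.repr m).sum fun i c => c • b i) := by
      rw [map_finsuppSum]
      exact Finsupp.sum_congr fun i _ => (map_smul (SymmAlg.ι R) _ _).symm
    rw [h1, h2, ← Finsupp.linearCombination_apply, b.linearCombination_repr]
  intro x
  have : x ∈ (SymmAlg.fromPoly b).range := by rw [htop]; trivial
  exact this

/-- Coefficients map from `F` to polynomials over `R ⧸ I`. -/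
def SymmAlg.coeffMap0 : F →ₗ[R] MvPolynomial κ (R ⧸ I) :=
  (Finsupp.linearCombination R fun i => (MvPolynomial.X i : MvPolynomial κ (R ⧸ I))) ∘ₗ
    (b.repr : F ≃ₗ[R] (κ →₀ R)).toLinearMap

theorem SymmAlg.smul_ker_le : (I • (⊤ : Submodule R F)) ≤ LinearMap.ker (SymmAlg.coeffMap0 I b) := by
  refine Submodule.smul_le.2 fun r hr m _ => ?_
  rw [LinearMap.mem_ker, map_smul, ← algebraMap_smul (R ⧸ I) r, Ideal.Quotient.algebraMap_eq,
    Ideal.Quotient.eq_zero_iff_mem.2 hr, zero_smul]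

/-- Coefficients map on the quotient module. -/
def SymmAlg.coeffMapQ : Fq →ₗ[R ⧸ I] MvPolynomial κ (R ⧸ I) where
  toFun := Submodule.liftQ _ (SymmAlg.coeffMap0 I b) (SymmAlg.smul_ker_le I b)
  map_add' := map_add _
  map_smul' c x := by
    obtain ⟨r, rfl⟩ := Ideal.Quotient.mk_surjective c
    show Submodule.liftQ _ (SymmAlg.coeffMap0 I b) (SymmAlg.smul_ker_le I b)
        ((Ideal.Quotient.mk I r) • x) = (Ideal.Quotient.mk I r) •
        Submodule.liftQ _ (SymmAlg.coeffMap0 I b) (SymmAlg.smul_ker_le I b) x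
    have h1 : (Ideal.Quotient.mk I r) • x = r • x := rfl
    rw [h1, map_smul, ← algebraMap_smul (R ⧸ I) r
      (Submodule.liftQ _ (SymmAlg.coeffMap0 I b) (SymmAlg.smul_ker_le I b) x),
      Ideal.Quotient.algebraMap_eq]

@[simp] theorem SymmAlg.coeffMapQ_mk (m : F) :
    SymmAlg.coeffMapQ I b (Submodule.Quotient.mk m) = SymmAlg.coeffMap0 I b m := rfl

/-- From the symmetric algebra of the reduction to polynomials. -/
def SymmAlg.toPolyQ : SymmAlg (R ⧸ I) Fq →ₐ[R ⧸ I] MvPolynomial κ (R ⧸ I) :=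
  SymmAlg.lift (R ⧸ I) (SymmAlg.coeffMapQ I b)

theorem SymmAlg.key_comp (p : MvPolynomial κ R) :
    SymmAlg.toPolyQ I b (SymmAlg.toQuot I (SymmAlg.fromPoly b p)) =
      MvPolynomial.map (Ideal.Quotient.mk I) p := by
  have key : (SymmAlg.toPolyQ I b).toRingHom.comp
      ((SymmAlg.toQuot I).toRingHom.comp (SymmAlg.fromPoly b).toRingHom)
      = (MvPolynomial.map (Ideal.Quotient.mk I)) := by
    apply MvPolynomial.ringHom_ext
    · intro r
      show SymmAlg.toPolyQ I b (SymmAlg.toQuot I (SymmAlg.fromPoly b (MvPolynomial.C r))) = _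
      rw [MvPolynomial.map_C]
      have h1 : SymmAlg.fromPoly b (MvPolynomial.C r) = algebraMap R (SymmAlg R F) r := by
        rw [SymmAlg.fromPoly, MvPolynomial.aeval_C]
      rw [h1, AlgHom.commutes, SymmAlg.quot_algebraMap_eq, AlgHom.commutes,
        MvPolynomial.algebraMap_eq]
    · intro i
      show SymmAlg.toPolyQ I b (SymmAlg.toQuot I (SymmAlg.fromPoly b (MvPolynomial.X i))) = _
      rw [MvPolynomial.map_X, SymmAlg.fromPoly_X, SymmAlg.toQuot_ι, SymmAlg.toPolyQ,
        SymmAlg.lift_ι_apply, SymmAlg.coeffMapQ_mk, SymmAlg.coeffMap0]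
      simp [Finsupp.linearCombination_single]
  exact DFunLike.congr_fun key p

theorem SymmAlg.image_adjoin (U : Submodule R F) :
    (Algebra.adjoin R (SymmAlg.ι R '' (U : Set F))).map (SymmAlg.toQuot I) =
      Subalgebra.restrictScalars R (Algebra.adjoin (R ⧸ I) (SymmAlg.ι (R ⧸ I) ''
        ((Submodule.map (Submodule.mkQ (I • ⊤ : Submodule R F)) U :
          Submodule R Fq) : Set Fq))) := by
  rw [AlgHom.map_adjoin, SymmAlg.adjoin_quot_eq]
  congr 1
  rw [Set.image_image, Submodule.map_coe, Set.image_image]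
  refine Set.image_congr fun m _ => ?_
  rw [SymmAlg.toQuot_ι, Submodule.mkQ_apply]

theorem SymmAlg.exists_psi (U : Submodule R F) :
    ∃ ψ : ↥(Algebra.adjoin R (SymmAlg.ι R '' (U : Set F))) →+*
      ↥(Algebra.adjoin (R ⧸ I) (SymmAlg.ι (R ⧸ I) ''
        ((Submodule.map (Submodule.mkQ (I • ⊤ : Submodule R F)) U :
          Submodule R Fq) : Set Fq))),
      Function.Surjective ψ ∧ ∀ a, SymmAlg.toQuot I (algebraMap _ (SymmAlg R F) a)
        = algebraMap _ (SymmAlg (R ⧸ I) Fq) (ψ a) := by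
  have hmem : ∀ a : ↥(Algebra.adjoin R (SymmAlg.ι R '' (U : Set F))),
      SymmAlg.toQuot I ↑a ∈ Algebra.adjoin (R ⧸ I) (SymmAlg.ι (R ⧸ I) ''
        ((Submodule.map (Submodule.mkQ (I • ⊤ : Submodule R F)) U :
          Submodule R Fq) : Set Fq)) := by
    intro a
    have h1 : SymmAlg.toQuot I ↑a ∈
        (Algebra.adjoin R (SymmAlg.ι R '' (U : Set F))).map (SymmAlg.toQuot I) :=
      ⟨a, a.2, rfl⟩
    rw [SymmAlg.image_adjoin] at h1
    exact h1
  refine ⟨{ toFun := fun a => ⟨SymmAlg.toQuot I ↑a, hmem a⟩,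
            map_one' := Subtype.ext (by simp),
            map_mul' := fun a b => Subtype.ext (by simp; rfl),
            map_zero' := Subtype.ext (by simp),
            map_add' := fun a b => Subtype.ext (by simp; rfl) }, ?_, fun a => rfl⟩
  rintro ⟨y, hy⟩
  have h2 : y ∈ (Algebra.adjoin R (SymmAlg.ι R '' (U : Set F))).map (SymmAlg.toQuot I) := by
    rw [SymmAlg.image_adjoin]
    exact hy
  obtain ⟨x, hx, rfl⟩ := h2
  exact ⟨⟨x, hx⟩, rfl⟩

end Quot

theorem SymmAlg.isNilpotent_of_forall_minimalPrimes {R : Type*} [CommRing R]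
    {F : Type*} [AddCommGroup F] [Module R F] {κ : Type*} (b : Module.Basis κ R F)
    (z : SymmAlg R F)
    (hz : ∀ Q ∈ minimalPrimes R, SymmAlg.toQuot Q z = 0) : IsNilpotent z := by
  obtain ⟨p, rfl⟩ := SymmAlg.fromPoly_surjective b z
  have hcoeff : ∀ d, p.coeff d ∈ nilradical R := by
    intro d
    rw [nilradical_eq_sInf, Ideal.mem_sInf]
    intro J hJ
    haveI : J.IsPrime := hJ
    obtain ⟨Q, hQ, hQJ⟩ := Ideal.exists_minimalPrimes_le (bot_le : (⊥ : Ideal R) ≤ J)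
    have hker := hz Q hQ
    have h3 := congrArg (SymmAlg.toPolyQ Q b) hker
    rw [SymmAlg.key_comp, map_zero] at h3
    have hc : Ideal.Quotient.mk Q (p.coeff d) = 0 := by
      rw [← MvPolynomial.coeff_map, h3, MvPolynomial.coeff_zero]
    exact hQJ (Ideal.Quotient.eq_zero_iff_mem.1 hc)
  have hp : IsNilpotent p := by
    rw [← mem_nilradical, MvPolynomial.as_sum p]
    refine Submodule.sum_mem _ fun d _ => ?_
    have h1 : MvPolynomial.C (p.coeff d) ∈ nilradical (MvPolynomial κ R) :=
      mem_nilradical.2 ((mem_nilradical.1 (hcoeff d)).map MvPolynomial.C)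
    have h2 : (MvPolynomial.monomial d) (p.coeff d)
        = MvPolynomial.C (p.coeff d) * MvPolynomial.monomial d 1 := by
      rw [MvPolynomial.C_mul_monomial, mul_one]
    rw [h2]
    exact Ideal.mul_mem_right _ _ h1
  exact hp.map (SymmAlg.fromPoly b)
theorem aux_isIntegral_map {A S A' S' : Type*} [CommRing A] [CommRing S] [CommRing A']
    [CommRing S'] [Algebra A S] [Algebra A' S'] (φ : S →+* S') (ψ : A →+* A')
    (hcomm : ∀ a, φ (algebraMap A S a) = algebraMap A' S' (ψ a))
    {x : S} (hx : IsIntegral A x) : IsIntegral A' (φ x) := by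
  obtain ⟨p, hp, he⟩ := hx
  refine ⟨p.map ψ, hp.map ψ, ?_⟩
  have h2 : (algebraMap A' S').comp ψ = φ.comp (algebraMap A S) := by
    ext a; simp [hcomm a]
  show Polynomial.eval₂ (algebraMap A' S') (φ x) (p.map ψ) = 0
  rw [Polynomial.eval₂_map, h2, ← Polynomial.hom_eval₂, he, map_zero]

theorem aux_exists_monic {A S A' S' : Type*} [CommRing A] [CommRing S] [CommRing A']
    [CommRing S'] [Nontrivial A'] [Algebra A S] [Algebra A' S'] (φ : S →+* S') (ψ : A →+* A')
    (hcomm : ∀ a, φ (algebraMap A S a) = algebraMap A' S' (ψ a))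
    (hsurj : Function.Surjective ψ)
    {x : S} (hx : IsIntegral A' (φ x)) : ∃ q : Polynomial A, q.Monic ∧ φ (Polynomial.aeval x q) = 0 := by
  obtain ⟨p, hp, he⟩ := hx
  have hl : p ∈ Polynomial.lifts ψ := by
    rw [Polynomial.mem_lifts p]
    exact (Polynomial.map_surjective ψ hsurj) p
  obtain ⟨q, hq1, _, hq3⟩ := Polynomial.lifts_and_degree_eq_and_monic hl hp
  refine ⟨q, hq3, ?_⟩
  have h2 : (algebraMap A' S').comp ψ = φ.comp (algebraMap A S) := by
    ext a; simp [hcomm a]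
  have : φ (Polynomial.aeval x q) = Polynomial.eval₂ (φ.comp (algebraMap A S)) (φ x) q := by
    rw [Polynomial.aeval_def, Polynomial.hom_eval₂]
  rw [this, ← h2, ← Polynomial.eval₂_map, hq1]
  exact he

set_option maxHeartbeats 1000000
set_option synthInstance.maxHeartbeats 400000

/-- For submodules `U ⊆ L` of a finite free module `F` over a Noetherian ring, `L` is integral
over `U` in `F` (the subalgebra of `Sym(F)` generated by `L` is integral over the one generated
by `U`) iff this holds modulo every minimal prime `Q` of `R`, working in
`Sym_{R/Q}(F/QF)`. -/
theorem integral_in_free_iff_modulo_minimal_primes {R : Type*} [CommRing R]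
    [IsNoetherianRing R]
    {F : Type*} [AddCommGroup F] [Module R F] [Module.Free R F] [Module.Finite R F]
    (U L : Submodule R F) (hUL : U ≤ L) :
    (∀ x ∈ Algebra.adjoin R (SymmAlg.ι R '' (L : Set F)),
        IsIntegral ↥(Algebra.adjoin R (SymmAlg.ι R '' (U : Set F))) x) ↔
      ∀ Q ∈ minimalPrimes R,
        ∀ x ∈ Algebra.adjoin (R ⧸ Q) (SymmAlg.ι (R ⧸ Q) ''
            ((Submodule.map (Submodule.mkQ (Q • ⊤ : Submodule R F)) L :
              Submodule R (F ⧸ (Q • ⊤ : Submodule R F))) : Set (F ⧸ (Q • ⊤ : Submodule R F)))),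
          IsIntegral ↥(Algebra.adjoin (R ⧸ Q) (SymmAlg.ι (R ⧸ Q) ''
            ((Submodule.map (Submodule.mkQ (Q • ⊤ : Submodule R F)) U :
              Submodule R (F ⧸ (Q • ⊤ : Submodule R F))) :
                Set (F ⧸ (Q • ⊤ : Submodule R F))))) x := by
  classical
  constructor
  · -- forward
    intro h Q hQ x' hx'
    haveI : Q.IsPrime := hQ.1.1
    obtain ⟨ψ, hψsurj, hψcomm⟩ := SymmAlg.exists_psi Q U
    -- x' is in the image of the adjoin of L
    have hx'2 : x' ∈ (Algebra.adjoin R (SymmAlg.ι R '' (L : Set F))).map (SymmAlg.toQuot Q) := by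
      rw [SymmAlg.image_adjoin]
      exact hx'
    obtain ⟨x, hx, rfl⟩ := hx'2
    exact aux_isIntegral_map (SymmAlg.toQuot Q).toRingHom ψ hψcomm (h x hx)
  · -- backward
    intro h x hx
    obtain ⟨κ, b⟩ := Module.Free.exists_basis (R := R) (M := F)
    have hfin := minimalPrimes.finite_of_isNoetherianRing R
    -- for each minimal prime, get a monic polynomial
    have hch : ∀ Q, Q ∈ minimalPrimes R → ∃ q : Polynomial
        ↥(Algebra.adjoin R (SymmAlg.ι R '' (U : Set F))),
        q.Monic ∧ SymmAlg.toQuot Q (Polynomial.aeval x q) = 0 := by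
      intro Q hQ
      haveI : Q.IsPrime := hQ.1.1
      obtain ⟨ψ, hψsurj, hψcomm⟩ := SymmAlg.exists_psi Q U
      have hmem : SymmAlg.toQuot Q x ∈ Algebra.adjoin (R ⧸ Q) (SymmAlg.ι (R ⧸ Q) ''
          ((Submodule.map (Submodule.mkQ (Q • ⊤ : Submodule R F)) L :
            Submodule R (F ⧸ (Q • ⊤ : Submodule R F))) :
              Set (F ⧸ (Q • ⊤ : Submodule R F)))) := by
        have h1 : SymmAlg.toQuot Q x ∈
            (Algebra.adjoin R (SymmAlg.ι R '' (L : Set F))).map (SymmAlg.toQuot Q) :=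
          ⟨x, hx, rfl⟩
        rw [SymmAlg.image_adjoin] at h1
        exact h1
      exact aux_exists_monic (SymmAlg.toQuot Q).toRingHom ψ hψcomm hψsurj (h Q hQ _ hmem)
    choose f hf1 hf2 using hch
    set T : Finset (Ideal R) := hfin.toFinset with hT
    have hTmem : ∀ Q : Ideal R, Q ∈ T ↔ Q ∈ minimalPrimes R := fun Q =>
      Set.Finite.mem_toFinset hfin
    set P0 : Polynomial ↥(Algebra.adjoin R (SymmAlg.ι R '' (U : Set F))) :=
      ∏ Q ∈ T.attach, f Q ((hTmem Q).1 Q.2) with hP0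
    have hP0monic : P0.Monic :=
      Polynomial.monic_prod_of_monic _ _ fun Q _ => hf1 Q ((hTmem Q).1 Q.2)
    have hz : ∀ Q' ∈ minimalPrimes R, SymmAlg.toQuot Q' (Polynomial.aeval x P0) = 0 := by
      intro Q' hQ'
      rw [hP0, map_prod, map_prod]
      exact Finset.prod_eq_zero (Finset.mem_attach T ⟨Q', (hTmem Q').2 hQ'⟩)
        (hf2 Q' ((hTmem Q').1 ((hTmem Q').2 hQ')))
    obtain ⟨n, hn⟩ := SymmAlg.isNilpotent_of_forall_minimalPrimes b _ hz
    refine ⟨P0 ^ n, hP0monic.pow n, ?_⟩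
    have : Polynomial.aeval x (P0 ^ n) = 0 := by rw [map_pow, hn]
    rwa [Polynomial.aeval_def] at this
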